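/- arXiv:1705.03761 — 2 statements merged into one kernel-verified Lean document; each statement's English description precedes it below -/
import Mathlib

section
/- For every subset S of {1,…,n}, the element C_S commutes with the Casimir element: [C_S, Γ] = 0, where Γ = ½([A₋, A₊] − 1)P. -/
/-! Clearing scalars, `4 C_S = K(X) := {A₋, [A₊, X]} − 2X` with `X = P_S`, and `2Γ = Q P` with
`Q = [A₋, A₊] − 1` the sCasimir. The global parity `P` anticommutes with `A₊, A₋` and commutes
with `X`, hence with `K(X)`; so it suffices that `K(X)` commutes with `Q`. Since `X` commutes with
`A₀`, `A₊²` and `A₋²`, `K(X)` commutes with `A₀` (`ad A₀` has weight `−1` on `A₋` and `+1` on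
`[A₊, X]`) and, by a direct computation in `osp(1,2)`, with `A₋A₊`; and `Q = 2A₋A₊ − 2A₀ − 1`. -/

/-- Product of pairwise-commuting elements `P s₁ ⋯ P s_k` over a finite index subset `S`. -/
def PS {R : Type*} [Monoid R] {n : ℕ} (P : Fin n → R)
    (hP : ∀ i j : Fin n, Commute (P i) (P j)) (S : Finset (Fin n)) : R :=
  S.noncommProd P fun i _ j _ _ => hP i j

/-- The centralizing element `C_X = ¼{A₋, [A₊, X]} − ½X` built from an involution `X`. -/
noncomputable def Cgen {R : Type*} [Ring R] [Algebra ℂ R] (Am Ap X : R) : R :=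
  (4 : ℂ)⁻¹ • (Am * (Ap * X - X * Ap) + (Ap * X - X * Ap) * Am) - (2 : ℂ)⁻¹ • X

section

variable {R : Type*} [Ring R]

/-- `4 • Cgen m p x`, free of scalars so that it makes sense in any ring. -/
def fourCgen (m p x : R) : R := m * (p * x - x * p) + (p * x - x * p) * m - 2 * x

theorem Cgen_eq_smul_fourCgen [Algebra ℂ R] (m p x : R) :
    Cgen m p x = (4 : ℂ)⁻¹ • fourCgen m p x := by
  rw [Cgen, fourCgen, smul_sub, two_mul, ← two_smul ℂ x, smul_smul]
  norm_num

theorem commute_fourCgen_of_anticommute {q m p x : R} (hqp : q * p + p * q = 0)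
    (hqm : q * m + m * q = 0) (hqx : Commute q x) : Commute q (fourCgen m p x) := by
  have hqu : q * (p * x - x * p) + (p * x - x * p) * q = 0 := by
    linear_combination (norm := noncomm_ring) hqp * x - p * hqx.eq - hqx.eq * p - x * hqp
  unfold fourCgen Commute SemiconjBy
  linear_combination (norm := noncomm_ring)
    hqm * (p * x - x * p) - m * hqu + hqu * m - (p * x - x * p) * hqm - 2 * hqx.eq

theorem commute_fourCgen_of_weight {a m p x : R} (hap : a * p - p * a = p)
    (ham : a * m - m * a = -m) (hxa : Commute x a) : Commute a (fourCgen m p x) := by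
  have hau : a * (p * x - x * p) - (p * x - x * p) * a = p * x - x * p := by
    linear_combination (norm := noncomm_ring) hap * x - x * hap - p * hxa.eq + hxa.eq * p
  unfold fourCgen Commute SemiconjBy
  linear_combination (norm := noncomm_ring)
    ham * (p * x - x * p) + m * hau + hau * m + (p * x - x * p) * ham + 2 * hxa.eq

theorem commute_mul_fourCgen {a m p x : R} (hpm : p * m + m * p = 2 * a)
    (hap : a * p - p * a = p) (ham : a * m - m * a = -m) (hxa : Commute x a)
    (hxp : Commute x (p * p)) (hxm : Commute x (m * m)) :
    Commute (m * p) (fourCgen m p x) := by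
  refine Commute.symm ?_
  unfold fourCgen Commute SemiconjBy
  linear_combination (norm := noncomm_ring)
    -(2 * (hpm * (a * x))) - 2 * (m * hap * x) + 4 * (a * hxa.eq) - 2 * (p * m * hxa.eq)
    + m * hxp.eq * m - m * hpm * (p * x) + p * hxm.eq * p + hpm * (m * x * p)
    + 2 * (ham * (x * p)) + hpm * (x * p * m) - p * m * x * hpm + 2 * (a * x * hpm)
    + hpm * (x * m * p) - m * m * hxp.eq - 2 * (m * hxa.eq * p) - 2 * (x * ham * p)
    - x * hpm * (m * p) + x * m * hpm * p - m * x * p * hpm + 2 * (m * x * hap)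
    - hxm.eq * (p * p)

theorem commute_sCasimir_fourCgen {a m p x : R} (hpm : p * m + m * p = 2 * a)
    (hap : a * p - p * a = p) (ham : a * m - m * a = -m) (hxa : Commute x a)
    (hxp : Commute x (p * p)) (hxm : Commute x (m * m)) :
    Commute (m * p - p * m - 1) (fourCgen m p x) := by
  have hQ : m * p - p * m - 1 = 2 * (m * p) - 2 * a - 1 := by
    rw [← hpm]; noncomm_ring
  rw [hQ]
  have hmp := commute_mul_fourCgen hpm hap ham hxa hxp hxm
  have ha := commute_fourCgen_of_weight hap ham hxa
  exact (((Commute.ofNat_left 2 _).mul_left hmp).sub_left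
    ((Commute.ofNat_left 2 _).mul_left ha)).sub_left (Commute.one_left _)

theorem commute_sCasimir_mul_fourCgen {a m p x q : R} (hpm : p * m + m * p = 2 * a)
    (hap : a * p - p * a = p) (ham : a * m - m * a = -m) (hxa : Commute x a)
    (hxp : Commute x (p * p)) (hxm : Commute x (m * m)) (hqp : q * p + p * q = 0)
    (hqm : q * m + m * q = 0) (hqx : Commute q x) :
    Commute ((m * p - p * m - 1) * q) (fourCgen m p x) :=
  (commute_sCasimir_fourCgen hpm hap ham hxa hxp hxm).mul_left
    (commute_fourCgen_of_anticommute hqp hqm hqx)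

end

theorem commute_PS {M : Type*} [Monoid M] {n : ℕ} (P : Fin n → M)
    (hP : ∀ i j : Fin n, Commute (P i) (P j)) (S : Finset (Fin n)) {y : M}
    (hy : ∀ i, Commute y (P i)) : Commute y (PS P hP S) :=
  Finset.noncommProd_commute S P _ y fun i _ => hy i

theorem stmt5_general
    {R : Type*} [Ring R] [Algebra ℂ R] {n : ℕ}
    (A₀ Ap Am Pb : R) (P : Fin n → R)
    (hPcomm : ∀ i j : Fin n, Commute (P i) (P j))
    (hPb : Pb = PS P hPcomm Finset.univ)
    (hPAp : Pb * Ap + Ap * Pb = 0)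
    (hPAm : Pb * Am + Am * Pb = 0)
    (hA0p : A₀ * Ap - Ap * A₀ = Ap)
    (hA0m : A₀ * Am - Am * A₀ = -Am)
    (hpm : Ap * Am + Am * Ap = 2 * A₀)
    (hPiA0 : ∀ i, P i * A₀ = A₀ * P i)
    (hPiBp : ∀ i, P i * (Ap * Ap) = (Ap * Ap) * P i)
    (hPiBm : ∀ i, P i * (Am * Am) = (Am * Am) * P i)
    (Γ : R) (hΓ : Γ = (2 : ℂ)⁻¹ • ((Am * Ap - Ap * Am - 1) * Pb)) :
    ∀ S : Finset (Fin n),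
      Cgen Am Ap (PS P hPcomm S) * Γ - Γ * Cgen Am Ap (PS P hPcomm S) = 0 := by
  intro S
  have hPbX : Commute Pb (PS P hPcomm S) := by
    rw [hPb]
    exact (commute_PS P hPcomm _ fun i => (commute_PS P hPcomm S fun j => hPcomm i j).symm).symm
  have key := commute_sCasimir_mul_fourCgen hpm hA0p hA0m
    (commute_PS P hPcomm S fun i => (hPiA0 i).symm).symm
    (commute_PS P hPcomm S fun i => (hPiBp i).symm).symm
    (commute_PS P hPcomm S fun i => (hPiBm i).symm).symm hPAp hPAm hPbX
  rw [sub_eq_zero, Cgen_eq_smul_fourCgen, hΓ]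
  exact ((key.smul_left _).smul_right _).symm.eq

theorem stmt5
    {R : Type*} [Ring R] [Algebra ℂ R] {n : ℕ}
    (A₀ Ap Am Pb : R) (P : Fin n → R)
    (hPcomm : ∀ i j : Fin n, Commute (P i) (P j))
    (hPb : Pb = PS P hPcomm Finset.univ)
    (hPsq : Pb * Pb = 1)
    (hPA0 : Pb * A₀ = A₀ * Pb)
    (hPAp : Pb * Ap + Ap * Pb = 0)
    (hPAm : Pb * Am + Am * Pb = 0)
    (hA0p : A₀ * Ap - Ap * A₀ = Ap)
    (hA0m : A₀ * Am - Am * A₀ = -Am)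
    (hpm : Ap * Am + Am * Ap = 2 * A₀)
    (hPi2 : ∀ i, P i * P i = 1)
    (hPiA0 : ∀ i, P i * A₀ = A₀ * P i)
    (hPiBp : ∀ i, P i * (Ap * Ap) = (Ap * Ap) * P i)
    (hPiBm : ∀ i, P i * (Am * Am) = (Am * Am) * P i)
    (hPPAp : ∀ i j, i ≠ j → P i * (P j * Ap - Ap * P j) = (P j * Ap - Ap * P j) * P i)
    (hPPAm : ∀ i j, i ≠ j → P i * (P j * Am - Am * P j) = (P j * Am - Am * P j) * P i)
    (Γ : R) (hΓ : Γ = (2 : ℂ)⁻¹ • ((Am * Ap - Ap * Am - 1) * Pb)) :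
    ∀ S : Finset (Fin n),
      Cgen Am Ap (PS P hPcomm S) * Γ - Γ * Cgen Am Ap (PS P hPcomm S) = 0 :=
  stmt5_general A₀ Ap Am Pb P hPcomm hPb hPAp hPAm hA0p hA0m hpm hPiA0 hPiBp hPiBm Γ hΓ
end

section
/- Let S = {s₁,…,s_k} be a k-element subset of {1,…,n}. Then P_S (∑_{i=1}^{k} P_{sᵢ} C_{sᵢ}) = (∑_{i=1}^{k} C_{sᵢ} P_{sᵢ}) P_S; equivalently, ∑_{i=1}^{k} [P_{S∖{sᵢ}}, C_{sᵢ}] = 0. -/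
/-!
For `s ∉ T`, `P_T` commutes with `P_s` and with `[A₊, P_s]`, so `[P_T, C_s] = ¼{[P_T, A₋], [A₊, P_s]}`;
expanding `[P_T, A₋]` by the Leibniz rule gives
`[P_{S∖s}, C_s] = ¼ ∑_{j ∈ S∖s} P_{S∖{s,j}} {[P_j, A₋], [A₊, P_s]}`.
The anticommutator is antisymmetric in `(s, j)` because `P_s` commutes with `{A₊, A₋} = 2A₀`,
so the double sum over ordered pairs vanishes. The first identity is the second one rewritten
with `P_S P_s = P_s P_S = P_{S∖s}`, which holds since `P_s² = 1`.
-/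

theorem Finset.sum_sum_erase_eq_zero_of_antisymm {α β : Type*} [DecidableEq α] [AddCommMonoid β]
    (S : Finset α) (F : α → α → β) (hF : ∀ a ∈ S, ∀ b ∈ S, a ≠ b → F a b + F b a = 0) :
    ∑ a ∈ S, ∑ b ∈ S.erase a, F a b = 0 := by
  rw [← Finset.sum_finset_product' S.offDiag S (fun a => S.erase a)
    (fun p => by rw [Finset.mem_offDiag, Finset.mem_erase]; tauto)]
  refine Finset.sum_involution (fun p _ => p.swap) (fun p hp => ?_) (fun p hp _ => ?_)
    (fun p hp => ?_) (fun p _ => p.swap_swap)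
  all_goals obtain ⟨ha, hb, hab⟩ := Finset.mem_offDiag.mp hp
  · exact hF _ ha _ hb hab
  · exact fun h => hab (congrArg Prod.fst h).symm
  · exact Finset.mem_offDiag.mpr ⟨hb, ha, hab.symm⟩

section Commutators

variable {R : Type*} [Ring R]

/-- The left side is `-[p, [q, {a, b}]]` plus terms linear in `[p, [q, a]]` and `[p, [q, b]]`. -/
theorem anticomm_comm_add_anticomm_comm_eq_zero {p q a b : R} (hpa : Commute p (q * a - a * q))
    (hpb : Commute p (q * b - b * q)) (hq : Commute q (b * a + a * b)) :
    (p * a - a * p) * (b * q - q * b) + (b * q - q * b) * (p * a - a * p)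
      + ((q * a - a * q) * (b * p - p * b) + (b * p - p * b) * (q * a - a * q)) = 0 := by
  linear_combination (norm := noncomm_ring)
    -(p * hq.eq) + hq.eq * p + a * hpb.eq + hpb.eq * a + hpa.eq * b + b * hpa.eq

theorem mul_Cgen_sub_Cgen_mul [Algebra ℂ R] (Am Ap : R) {Q X : R} (hQX : Commute Q X)
    (hQB : Commute Q (Ap * X - X * Ap)) :
    Q * Cgen Am Ap X - Cgen Am Ap X * Q
      = (4 : ℂ)⁻¹ • ((Q * Am - Am * Q) * (Ap * X - X * Ap)
          + (Ap * X - X * Ap) * (Q * Am - Am * Q)) := by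
  have hbracket : Q * (Am * (Ap * X - X * Ap) + (Ap * X - X * Ap) * Am)
      - (Am * (Ap * X - X * Ap) + (Ap * X - X * Ap) * Am) * Q
      = (Q * Am - Am * Q) * (Ap * X - X * Ap) + (Ap * X - X * Ap) * (Q * Am - Am * Q) := by
    linear_combination (norm := noncomm_ring) Am * hQB.eq + hQB.eq * Am
  rw [Cgen, mul_sub Q, sub_mul _ _ Q, mul_smul_comm, mul_smul_comm, smul_mul_assoc,
    smul_mul_assoc, hQX.eq, sub_sub_sub_cancel_right, ← smul_sub, hbracket]

end Commutators

section ProductOfCommuting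

variable {R : Type*} [Ring R] {n : ℕ} (P : Fin n → R) (hP : ∀ i j : Fin n, Commute (P i) (P j))

theorem PS_empty : PS P hP ∅ = 1 :=
  Finset.noncommProd_empty P _

theorem PS_insert {a : Fin n} {T : Finset (Fin n)} (ha : a ∉ T) :
    PS P hP (insert a T) = P a * PS P hP T :=
  Finset.noncommProd_insert_of_notMem T a P _ ha

theorem commute_PS_s8 {x : R} {T : Finset (Fin n)} (h : ∀ j ∈ T, Commute x (P j)) :
    Commute x (PS P hP T) :=
  Finset.noncommProd_commute T P _ x h

theorem PS_erase_mul {a : Fin n} {T : Finset (Fin n)} (ha : a ∈ T) :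
    PS P hP (T.erase a) * P a = PS P hP T :=
  Finset.noncommProd_erase_mul T ha P _

theorem mul_PS_erase {a : Fin n} {T : Finset (Fin n)} (ha : a ∈ T) :
    P a * PS P hP (T.erase a) = PS P hP T :=
  Finset.mul_noncommProd_erase T ha P _

theorem PS_mul_sub_mul_PS {x : R} (hx : ∀ i j, i ≠ j → Commute (P i) (P j * x - x * P j))
    (T : Finset (Fin n)) :
    PS P hP T * x - x * PS P hP T = ∑ j ∈ T, PS P hP (T.erase j) * (P j * x - x * P j) := by
  induction T using Finset.induction_on with
  | empty => simp [PS_empty]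
  | insert a T ha ih =>
    have hDa : Commute (P a * x - x * P a) (PS P hP T) :=
      commute_PS_s8 P hP fun j hj => (hx j a (ne_of_mem_of_not_mem hj ha)).symm
    have herase : ∀ j ∈ T, PS P hP ((insert a T).erase j) = P a * PS P hP (T.erase j) :=
      fun j hj => by
        rw [Finset.erase_insert_of_ne (ne_of_mem_of_not_mem hj ha).symm,
          PS_insert P hP fun h => ha (Finset.mem_of_mem_erase h)]
    rw [PS_insert P hP ha, Finset.sum_insert ha, Finset.erase_insert ha,
      Finset.sum_congr rfl fun j hj => by rw [herase j hj, mul_assoc], ← Finset.mul_sum, ← ih,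
      ← hDa.eq]
    noncomm_ring

end ProductOfCommuting

section CentralizingElements

variable {R : Type*} [Ring R] [Algebra ℂ R] {n : ℕ} (P : Fin n → R)
  (hP : ∀ i j : Fin n, Commute (P i) (P j)) (Am Ap : R)

theorem PS_mul_Cgen_sub_Cgen_mul_PS
    (hAp : ∀ i j, i ≠ j → Commute (P i) (P j * Ap - Ap * P j))
    (hAm : ∀ i j, i ≠ j → Commute (P i) (P j * Am - Am * P j)) {s : Fin n} {T : Finset (Fin n)}
    (hs : s ∉ T) :
    PS P hP T * Cgen Am Ap (P s) - Cgen Am Ap (P s) * PS P hP T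
      = (4 : ℂ)⁻¹ • ∑ j ∈ T, PS P hP (T.erase j) *
          ((P j * Am - Am * P j) * (Ap * P s - P s * Ap)
            + (Ap * P s - P s * Ap) * (P j * Am - Am * P j)) := by
  have hB : ∀ U ⊆ T, Commute (PS P hP U) (Ap * P s - P s * Ap) := fun U hU =>
    (commute_PS_s8 P hP fun j hj => by
      simpa only [neg_sub] using (hAp j s (ne_of_mem_of_not_mem (hU hj) hs)).neg_right.symm).symm
  rw [mul_Cgen_sub_Cgen_mul Am Ap (commute_PS_s8 P hP fun j _ => hP s j).symm (hB T subset_rfl),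
    PS_mul_sub_mul_PS P hP hAm, Finset.sum_mul, Finset.mul_sum, ← Finset.sum_add_distrib]
  congr 1
  refine Finset.sum_congr rfl fun j _ => ?_
  rw [mul_assoc, ← mul_assoc (Ap * P s - P s * Ap), ← (hB _ (Finset.erase_subset j T)).eq,
    mul_assoc, ← mul_add]

end CentralizingElements

theorem stmt8_general
    {R : Type*} [Ring R] [Algebra ℂ R] {n : ℕ}
    (A₀ Ap Am : R) (P : Fin n → R)
    (hPcomm : ∀ i j : Fin n, Commute (P i) (P j))
    (hpm : Ap * Am + Am * Ap = 2 * A₀)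
    (hPi2 : ∀ i, P i * P i = 1)
    (hPiA0 : ∀ i, P i * A₀ = A₀ * P i)
    (hPPAp : ∀ i j, i ≠ j → P i * (P j * Ap - Ap * P j) = (P j * Ap - Ap * P j) * P i)
    (hPPAm : ∀ i j, i ≠ j → P i * (P j * Am - Am * P j) = (P j * Am - Am * P j) * P i)
    :
    ∀ S : Finset (Fin n),
      (PS P hPcomm S * ∑ s ∈ S, P s * Cgen Am Ap (P s)
        = (∑ s ∈ S, Cgen Am Ap (P s) * P s) * PS P hPcomm S) ∧
      (∑ s ∈ S, (PS P hPcomm (S.erase s) * Cgen Am Ap (P s)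
          - Cgen Am Ap (P s) * PS P hPcomm (S.erase s)) = 0) := by
  intro S
  have hanti : ∀ s, Commute (P s) (Ap * Am + Am * Ap) := fun s => by
    rw [hpm]
    exact (Commute.ofNat_right (P s) 2).mul_right (hPiA0 s)
  have hvanish : ∑ s ∈ S, (PS P hPcomm (S.erase s) * Cgen Am Ap (P s)
      - Cgen Am Ap (P s) * PS P hPcomm (S.erase s)) = 0 := by
    rw [Finset.sum_congr rfl fun s _ => PS_mul_Cgen_sub_Cgen_mul_PS P hPcomm Am Ap hPPAp hPPAm
      (S.notMem_erase s), ← Finset.smul_sum, Finset.sum_sum_erase_eq_zero_of_antisymm, smul_zero]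
    intro s _ j _ hsj
    rw [Finset.erase_right_comm, ← mul_add,
      anticomm_comm_add_anticomm_comm_eq_zero (hPPAm j s hsj.symm) (hPPAp j s hsj.symm) (hanti s),
      mul_zero]
  refine ⟨?_, hvanish⟩
  rw [← sub_eq_zero, Finset.mul_sum, Finset.sum_mul, ← Finset.sum_sub_distrib, ← hvanish]
  refine Finset.sum_congr rfl fun s hs => ?_
  have hL : PS P hPcomm S * P s = PS P hPcomm (S.erase s) := by
    rw [← PS_erase_mul P hPcomm hs, mul_assoc, hPi2, mul_one]
  have hR : P s * PS P hPcomm S = PS P hPcomm (S.erase s) := by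
    rw [← mul_PS_erase P hPcomm hs, ← mul_assoc, hPi2, one_mul]
  rw [← mul_assoc, hL, mul_assoc, hR]

theorem stmt8
    {R : Type*} [Ring R] [Algebra ℂ R] {n : ℕ}
    (A₀ Ap Am Pb : R) (P : Fin n → R)
    (hPcomm : ∀ i j : Fin n, Commute (P i) (P j))
    (hPb : Pb = PS P hPcomm Finset.univ)
    (hPsq : Pb * Pb = 1)
    (hPA0 : Pb * A₀ = A₀ * Pb)
    (hPAp : Pb * Ap + Ap * Pb = 0)
    (hPAm : Pb * Am + Am * Pb = 0)
    (hA0p : A₀ * Ap - Ap * A₀ = Ap)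
    (hA0m : A₀ * Am - Am * A₀ = -Am)
    (hpm : Ap * Am + Am * Ap = 2 * A₀)
    (hPi2 : ∀ i, P i * P i = 1)
    (hPiA0 : ∀ i, P i * A₀ = A₀ * P i)
    (hPiBp : ∀ i, P i * (Ap * Ap) = (Ap * Ap) * P i)
    (hPiBm : ∀ i, P i * (Am * Am) = (Am * Am) * P i)
    (hPPAp : ∀ i j, i ≠ j → P i * (P j * Ap - Ap * P j) = (P j * Ap - Ap * P j) * P i)
    (hPPAm : ∀ i j, i ≠ j → P i * (P j * Am - Am * P j) = (P j * Am - Am * P j) * P i)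
    :
    ∀ S : Finset (Fin n),
      (PS P hPcomm S * ∑ s ∈ S, P s * Cgen Am Ap (P s)
        = (∑ s ∈ S, Cgen Am Ap (P s) * P s) * PS P hPcomm S) ∧
      (∑ s ∈ S, (PS P hPcomm (S.erase s) * Cgen Am Ap (P s)
          - Cgen Am Ap (P s) * PS P hPcomm (S.erase s)) = 0) :=
  stmt8_general A₀ Ap Am P hPcomm hpm hPi2 hPiA0 hPPAp hPPAm
end
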